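/- arXiv:1902.00992 — 4 statements merged into one kernel-verified Lean document; each statement's English description precedes it below -/
import Mathlib

section
/- Let (Ω,Σ,P) be a probability space, let K be a convex set of random variables that is bounded in L^1(P), and let S be a nonempty set of random variables. The following are equivalent: (1) there exists a probability measure Q equivalent to P such that whenever a sequence (X_n) in K converges in P-probability to some X ∈ S, then E_Q[|X_n − X|] → 0; (2) for every ε > 0 there exists a measurable set A with P(A) > 1 − ε such that whenever a sequence (X_n) in K converges in P-probability to some X ∈ S, then E_P[|X_n − X|·1_A] → 0; (3) for every measurable set A with P(A) > 0 there exists a measurable subset B of A with P(B) > 0 such that whenever a sequence (X_n) in K converges in P-probability to some X ∈ S, then E_P[|X_n − X|·1_B] → 0. -/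
open MeasureTheory Filter Set ProbabilityTheory

noncomputable section

namespace Paper

variable {Ω : Type*} [MeasurableSpace Ω]

/-- The metric `d(X,Y) = E_P[min(|X - Y|, 1)]` metrizing convergence in `P`-probability. -/
def probDist (P : Measure Ω) (X Y : Ω → ℝ) : ℝ :=
  ∫ ω, min |X ω - Y ω| 1 ∂P

/-- `Q` is a probability measure equivalent to `P` (mutually absolutely continuous). -/
def EquivProb (P Q : Measure Ω) : Prop :=
  IsProbabilityMeasure Q ∧ Q ≪ P ∧ P ≪ Q

/-- `K` is a set of `P`-integrable random variables bounded in `L¹(P)`. -/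
def BddL1 (P : Measure Ω) (K : Set (Ω → ℝ)) : Prop :=
  (∀ X ∈ K, Integrable X P) ∧ ∃ C : ℝ, ∀ X ∈ K, (∫ ω, |X ω| ∂P) ≤ C

/-- `K` is `Q`-uniformly integrable: all members are `Q`-integrable and
`sup_{X ∈ K} E_Q[|X| · 1_{|X| > c}] → 0` as `c → ∞`. -/
def UIset (Q : Measure Ω) (K : Set (Ω → ℝ)) : Prop :=
  (∀ X ∈ K, Integrable X Q) ∧
  ∀ ε : ℝ, 0 < ε → ∃ c : ℝ, ∀ X ∈ K, (∫ ω in {ω | c < |X ω|}, |X ω| ∂Q) < ε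

/-- The sequence `Xs` is Cauchy in `P`-probability. -/
def CauchyInProb (P : Measure Ω) (Xs : ℕ → Ω → ℝ) : Prop :=
  ∀ ε : ℝ, 0 < ε →
    Tendsto (fun p : ℕ × ℕ => P {ω | ε ≤ |Xs p.1 ω - Xs p.2 ω|}) atTop (nhds 0)

/-- The (sequential) closure of `K` in the topology of convergence in `P`-probability. -/
def probClosure (P : Measure Ω) (K : Set (Ω → ℝ)) : Set (Ω → ℝ) :=
  {X | ∃ Xs : ℕ → Ω → ℝ, (∀ n, Xs n ∈ K) ∧ TendstoInMeasure P Xs atTop X}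

/-- A set `W` of random variables is solid: if `X ∈ W` and `|Y| ≤ |X|` a.s. then `Y ∈ W`. -/
def SolidSet (P : Measure Ω) (W : Set (Ω → ℝ)) : Prop :=
  ∀ X ∈ W, ∀ Y : Ω → ℝ, AEStronglyMeasurable Y P →
    (∀ᵐ ω ∂P, |Y ω| ≤ |X ω|) → Y ∈ W

/-- The solid hull of a set `A` of random variables. -/
def solidHull (P : Measure Ω) (A : Set (Ω → ℝ)) : Set (Ω → ℝ) :=
  {Y | AEStronglyMeasurable Y P ∧ ∃ X ∈ A, ∀ᵐ ω ∂P, |Y ω| ≤ |X ω|}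

/-- The relative `L⁰(P)`-topology on `K` is uniformly locally convex-solid on `S`:
for every `ε > 0` there is a convex solid set `W` of integrable random variables contained in the
`ε`-ball around `0` such that, for each `X ∈ S`, `(X + W) ∩ K` contains a `d`-ball of `K`
around `X`. -/
def UnifLCS (P : Measure Ω) (K S : Set (Ω → ℝ)) : Prop :=
  ∀ ε : ℝ, 0 < ε → ∃ W : Set (Ω → ℝ),
    (∀ Z ∈ W, Integrable Z P) ∧ Convex ℝ W ∧ SolidSet P W ∧
    (∀ Z ∈ W, probDist P Z 0 < ε) ∧
    ∀ X ∈ S, ∃ δ : ℝ, 0 < δ ∧ ∀ Z ∈ K, probDist P Z X < δ → Z - X ∈ W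

/-- The `L⁰(Q)`- and `L¹(Q)`-topologies agree on `K`: a sequence in `K` converges in
`P`-probability to a member of `K` iff it converges in `L¹(Q)`-norm. -/
def TopAgree (P Q : Measure Ω) (K : Set (Ω → ℝ)) : Prop :=
  ∀ (Xs : ℕ → Ω → ℝ) (X : Ω → ℝ), (∀ n, Xs n ∈ K) → X ∈ K →
    (TendstoInMeasure P Xs atTop X ↔
      Tendsto (fun n => ∫⁻ ω, ENNReal.ofReal |Xs n ω - X ω| ∂Q) atTop (nhds 0))

/-- `W` is a forward convex combination of the sequence `Z`. -/
def IsFCC (Z : ℕ → Ω → ℝ) (W : ℕ → Ω → ℝ) : Prop :=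
  ∀ k, W k ∈ convexHull ℝ (Z '' {n | k ≤ n})

/-- The relative `L⁰(P)`-topology on `K` is locally convex at `X` (forward convex combination
formulation): every FCC of a sequence in `K` converging to `X` in probability also converges
to `X` in probability. -/
def LocConvexAt (P : Measure Ω) (K : Set (Ω → ℝ)) (X : Ω → ℝ) : Prop :=
  ∀ Xs : ℕ → Ω → ℝ, (∀ n, Xs n ∈ K) → TendstoInMeasure P Xs atTop X →
    ∀ W : ℕ → Ω → ℝ, IsFCC Xs W → TendstoInMeasure P W atTop X

/-- The set `L = {Σ_k a_k R_k : Σ_k |a_k| ≤ 1}` (with pointwise a.e. absolutely convergent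
series, which also converge in `L¹(P)`). -/
def Lset (R : ℕ → Ω → ℝ) : Set (Ω → ℝ) :=
  {G | ∃ a : ℕ → ℝ, Summable (fun k => |a k|) ∧ (∑' k, |a k|) ≤ 1 ∧
    G = fun ω => ∑' k, a k * R k ω}

/-- The standard Cauchy distribution on `ℝ`. -/
def cauchyLaw : Measure ℝ :=
  MeasureTheory.volume.withDensity (fun t => ENNReal.ofReal (1 / (Real.pi * (1 + t ^ 2))))

/-- Local convexity of the relative topology on `A ⊆ E` at a point `x ∈ A`, in a topological
vector space. -/
def LocConvexAtTVS {E : Type*} [AddCommGroup E] [Module ℝ E] [TopologicalSpace E]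
    (A : Set E) (x : E) : Prop :=
  ∀ V ∈ nhds (0 : E), ∃ U ∈ nhds (0 : E), ∃ C : Set E,
    Convex ℝ C ∧ ((fun u => x + u) '' U) ∩ A ⊆ C ∧ C ⊆ ((fun v => x + v) '' V) ∩ A

open scoped ENNReal Topology

/-!
Call a measure `μ` good when sequences of `K` converging in `P`-probability to a point of `S`
converge in `L¹(μ)`; goodness passes to smaller measures, finite multiples and finite sums.
(1) ⇒ (2): with `f = dP/dQ`, `P` is dominated by `c • Q` on `{f ≤ c}`, and `P {f > c} → 0`.
(2) ⇒ (3): intersect `A` with a set of probability `> 1 - P A` on which `P` is good.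
(3) ⇒ (1): an exhaustion argument yields sets `B k` covering `Ω` up to a `P`-null set with each
`P|B k` good, and `Q ∝ ∑ 2⁻ᵏ • P|B k` is equivalent to `P`. By Fatou the `L¹(P)`-bound on `K`
passes to limits in probability, so the `L¹(P|B k)`-distances are bounded uniformly in `k`, and
dominated convergence in `k` gives convergence in `L¹(Q)`.
-/

theorem ENNReal.tendsto_tsum_of_dominated_convergence {f : ℕ → ℕ → ℝ≥0∞} {g : ℕ → ℝ≥0∞}
    (hg : ∑' k, g k ≠ ∞) (hfg : ∀ n k, f n k ≤ g k) (hf : ∀ k, Tendsto (f · k) atTop (𝓝 0)) :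
    Tendsto (fun n => ∑' k, f n k) atTop (𝓝 0) := by
  simp_rw [← lintegral_count]
  simpa using tendsto_lintegral_of_dominated_convergence (μ := Measure.count) g
    (fun _ => .of_discrete) (fun n => ae_of_all _ (hfg n)) (by rwa [lintegral_count])
    (ae_of_all _ hf)

theorem BddL1.exists_lintegral_abs_sub_le {P : Measure Ω} {K : Set (Ω → ℝ)} (hK : BddL1 P K)
    {Xs : ℕ → Ω → ℝ} {X : Ω → ℝ} (hXs : ∀ n, Xs n ∈ K) (hconv : TendstoInMeasure P Xs atTop X) :
    ∃ M : ℝ≥0∞, M ≠ ∞ ∧ ∀ n, ∫⁻ ω, ENNReal.ofReal |Xs n ω - X ω| ∂P ≤ M := by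
  obtain ⟨hint, C, hC⟩ := hK
  have hXs_meas n : AEStronglyMeasurable (Xs n) P := (hint _ (hXs n)).1
  have hXs_le n : eLpNorm (Xs n) 1 P ≤ ENNReal.ofReal C := by
    rw [eLpNorm_one_eq_lintegral_enorm, ← ofReal_integral_norm_eq_lintegral_enorm (hint _ (hXs n))]
    exact ENNReal.ofReal_le_ofReal (by simpa only [Real.norm_eq_abs] using hC _ (hXs n))
  have hX_le : eLpNorm X 1 P ≤ ENNReal.ofReal C :=
    eLpNorm_le_of_tendstoInMeasure (.of_forall hXs_le) hconv hXs_meas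
  refine ⟨ENNReal.ofReal C + ENNReal.ofReal C, by finiteness, fun n => ?_⟩
  calc ∫⁻ ω, ENNReal.ofReal |Xs n ω - X ω| ∂P = eLpNorm (Xs n - X) 1 P := by
        simp [eLpNorm_one_eq_lintegral_enorm, Real.enorm_eq_ofReal_abs]
    _ ≤ eLpNorm (Xs n) 1 P + eLpNorm X 1 P :=
        eLpNorm_sub_le (hXs_meas n) (hconv.aestronglyMeasurable hXs_meas) le_rfl
    _ ≤ _ := add_le_add (hXs_le n) hX_le

theorem exists_seq_measure_compl_iUnion_eq_zero {μ : Measure Ω} [IsFiniteMeasure μ]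
    {p : Set Ω → Prop} (h_empty : p ∅) (h_union : ∀ s t, p s → p t → p (s ∪ t))
    (h_meas : ∀ s, p s → MeasurableSet s)
    (h_sub : ∀ A, MeasurableSet A → 0 < μ A → ∃ B ⊆ A, p B ∧ 0 < μ B) :
    ∃ B : ℕ → Set Ω, (∀ n, p (B n)) ∧ μ (⋃ n, B n)ᶜ = 0 := by
  obtain ⟨u, -, hu_lim, hu_mem⟩ := exists_seq_tendsto_sSup (S := μ '' {s | p s})
    ⟨_, mem_image_of_mem μ h_empty⟩ (OrderTop.bddAbove _)
  choose B hB hBu using hu_mem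
  refine ⟨B, hB, ?_⟩
  by_contra hpos
  have hUm : MeasurableSet (⋃ n, B n) := .iUnion fun n => h_meas _ (hB n)
  obtain ⟨C, hCU, hC, hCpos⟩ := h_sub _ hUm.compl (pos_iff_ne_zero.2 hpos)
  have hle : ∀ n, u n + μ C ≤ sSup (μ '' {s | p s}) := fun n => by
    have hdisj : Disjoint (B n) C :=
      (disjoint_compl_right.mono_left (subset_iUnion B n)).mono_right hCU
    rw [← hBu n, ← measure_union hdisj (h_meas _ hC)]
    exact le_sSup (mem_image_of_mem μ (h_union _ _ (hB n) hC))
  have hsup_ne_top : sSup (μ '' {s | p s}) ≠ ∞ := ne_top_of_le_ne_top (measure_ne_top μ univ)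
    (sSup_le (forall_mem_image.2 fun s _ => measure_mono (subset_univ s)))
  have hlim : sSup (μ '' {s | p s}) + μ C ≤ sSup (μ '' {s | p s}) + 0 := by
    simpa using le_of_tendsto' (hu_lim.add tendsto_const_nhds) hle
  exact hCpos.ne' (nonpos_iff_eq_zero.1 (ENNReal.le_of_add_le_add_left hsup_ne_top hlim))

def InMeasureImpliesL1 (P : Measure Ω) (K S : Set (Ω → ℝ)) (μ : Measure Ω) : Prop :=
  ∀ (Xs : ℕ → Ω → ℝ) (X : Ω → ℝ), (∀ n, Xs n ∈ K) → X ∈ S → TendstoInMeasure P Xs atTop X →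
    Tendsto (fun n => ∫⁻ ω, ENNReal.ofReal |Xs n ω - X ω| ∂μ) atTop (𝓝 0)

namespace InMeasureImpliesL1

variable {P μ ν : Measure Ω} {K S : Set (Ω → ℝ)}

theorem zero : InMeasureImpliesL1 P K S 0 := fun _ _ _ _ _ => by simp

theorem mono (h : InMeasureImpliesL1 P K S μ) (hνμ : ν ≤ μ) : InMeasureImpliesL1 P K S ν :=
  fun Xs X hXs hX hconv => tendsto_of_tendsto_of_tendsto_of_le_of_le tendsto_const_nhds
    (h Xs X hXs hX hconv) (fun _ => zero_le) (fun _ => lintegral_mono' hνμ le_rfl)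

theorem add (hμ : InMeasureImpliesL1 P K S μ) (hν : InMeasureImpliesL1 P K S ν) :
    InMeasureImpliesL1 P K S (μ + ν) := fun Xs X hXs hX hconv => by
  simpa [lintegral_add_measure] using (hμ Xs X hXs hX hconv).add (hν Xs X hXs hX hconv)

theorem smul (h : InMeasureImpliesL1 P K S μ) {c : ℝ≥0∞} (hc : c ≠ ∞) :
    InMeasureImpliesL1 P K S (c • μ) := fun Xs X hXs hX hconv => by
  simpa [lintegral_smul_measure] using ENNReal.Tendsto.const_mul (h Xs X hXs hX hconv) (.inr hc)

theorem sum_smul (hK : BddL1 P K) {μ : ℕ → Measure Ω} (hμP : ∀ k, μ k ≤ P)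
    (hμ : ∀ k, InMeasureImpliesL1 P K S (μ k)) {w : ℕ → ℝ≥0∞} (hw : ∑' k, w k ≠ ∞) :
    InMeasureImpliesL1 P K S (Measure.sum fun k => w k • μ k) := fun Xs X hXs hX hconv => by
  obtain ⟨M, hM, hle⟩ := hK.exists_lintegral_abs_sub_le hXs hconv
  simp only [lintegral_sum_measure]
  refine ENNReal.tendsto_tsum_of_dominated_convergence (g := fun k => w k * M)
    (by rw [ENNReal.tsum_mul_right]; exact ENNReal.mul_ne_top hw hM) (fun n k => ?_)
    (fun k => (hμ k).smul (ENNReal.ne_top_of_tsum_ne_top hw k) Xs X hXs hX hconv)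
  rw [lintegral_smul_measure, smul_eq_mul]
  gcongr
  exact (lintegral_mono' (hμP k) le_rfl).trans (hle n)

end InMeasureImpliesL1

theorem exists_measure_compl_lt_restrict_le_smul {P Q : Measure Ω} [IsFiniteMeasure P]
    [P.HaveLebesgueDecomposition Q] (hPQ : P ≪ Q) {ε : ℝ≥0∞} (hε : 0 < ε) :
    ∃ A, MeasurableSet A ∧ P Aᶜ < ε ∧ ∃ c : ℕ, P.restrict A ≤ (c : ℝ≥0∞) • Q := by
  set f := P.rnDeriv Q
  have hf : Measurable f := Measure.measurable_rnDeriv P Q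
  have hf_top : P {ω | ¬ f ω < ∞} = 0 := ae_iff.1 (hPQ.ae_le (Measure.rnDeriv_lt_top P Q))
  have hlarge : Tendsto (fun c : ℕ => P {ω | (c : ℝ≥0∞) < f ω}) atTop (𝓝 0) := by
    have hinter : P (⋂ c : ℕ, {ω | (c : ℝ≥0∞) < f ω}) = 0 := by
      refine measure_mono_null (fun ω hω => ?_) hf_top
      intro hω_lt
      obtain ⟨n, hn⟩ := ENNReal.exists_nat_gt hω_lt.ne
      exact lt_asymm hn (mem_iInter.1 hω n)
    rw [← hinter]
    exact tendsto_measure_iInter_atTop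
      (fun c => (measurableSet_lt measurable_const hf).nullMeasurableSet)
      (fun i j hij ω (hω : (j : ℝ≥0∞) < f ω) => (Nat.mono_cast hij).trans_lt hω)
      ⟨0, measure_ne_top _ _⟩
  obtain ⟨c, hc⟩ := (hlarge.eventually_lt_const hε).exists
  have hA : MeasurableSet {ω | f ω ≤ c} := measurableSet_le hf measurable_const
  refine ⟨_, hA, by simpa only [compl_ofPred, not_le] using hc, c, ?_⟩
  calc P.restrict {ω | f ω ≤ c}
      = (Q.restrict {ω | f ω ≤ c}).withDensity f := by
        rw [← restrict_withDensity hA, Measure.withDensity_rnDeriv_eq P Q hPQ]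
    _ ≤ (Q.restrict {ω | f ω ≤ c}).withDensity (fun _ => c) :=
        withDensity_mono ((ae_restrict_iff' hA).2 (ae_of_all _ fun _ hω => hω))
    _ ≤ (c : ℝ≥0∞) • Q := by
        rw [withDensity_const]
        gcongr
        exact Measure.restrict_le_self

theorem equivProb_inv_measure_univ_smul {P ν : Measure Ω} [IsFiniteMeasure ν] [NeZero ν]
    (hνP : ν ≪ P) (hPν : P ≪ ν) : EquivProb P ((ν univ)⁻¹ • ν) :=
  ⟨inferInstance, Measure.smul_absolutelyContinuous.trans hνP,
    hPν.trans (Measure.absolutelyContinuous_smul (ENNReal.inv_ne_zero.2 (measure_ne_top _ _)))⟩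

theorem absolutelyContinuous_sum_smul_restrict {μ : Measure Ω} {B : ℕ → Set Ω}
    (hB : μ (⋃ k, B k)ᶜ = 0) {w : ℕ → ℝ≥0∞} (hw : ∀ k, w k ≠ 0) :
    μ ≪ Measure.sum fun k => w k • μ.restrict (B k) := fun t ht => by
  simp only [Measure.sum_apply_of_countable, Measure.smul_apply, smul_eq_mul,
    ENNReal.tsum_eq_zero, mul_eq_zero, hw, false_or] at ht
  have hcover : t ⊆ (⋃ k, t ∩ B k) ∪ (⋃ k, B k)ᶜ := fun ω hω => by
    by_cases h : ω ∈ ⋃ k, B k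
    · obtain ⟨k, hk⟩ := mem_iUnion.1 h
      exact .inl (mem_iUnion.2 ⟨k, hω, hk⟩)
    · exact .inr h
  refine measure_mono_null hcover (measure_union_null (measure_iUnion_null fun k => ?_) hB)
  exact nonpos_iff_eq_zero.1 ((Measure.le_restrict_apply _ _).trans (ht k).le)

section

variable {P : Measure Ω} {K S : Set (Ω → ℝ)}

theorem forall_exists_restrict_of_exists_equivProb [IsProbabilityMeasure P]
    (h : ∃ Q, EquivProb P Q ∧ InMeasureImpliesL1 P K S Q) :
    ∀ ε : ℝ, 0 < ε → ∃ A, MeasurableSet A ∧ 1 - ε < (P A).toReal ∧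
      InMeasureImpliesL1 P K S (P.restrict A) := by
  obtain ⟨Q, ⟨hQ, -, hPQ⟩, hQgood⟩ := h
  intro ε hε
  obtain ⟨A, hA, hAc, c, hle⟩ :=
    exists_measure_compl_lt_restrict_le_smul hPQ (ENNReal.ofReal_pos.2 hε)
  refine ⟨A, hA, ?_, (hQgood.smul (ENNReal.natCast_ne_top c)).mono hle⟩
  have hsum := probReal_add_probReal_compl (μ := P) hA
  have := ENNReal.toReal_lt_of_lt_ofReal hAc
  rw [measureReal_def, measureReal_def] at hsum
  linarith

theorem forall_exists_subset_of_forall_exists_restrict [IsProbabilityMeasure P]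
    (h : ∀ ε : ℝ, 0 < ε → ∃ A, MeasurableSet A ∧ 1 - ε < (P A).toReal ∧
      InMeasureImpliesL1 P K S (P.restrict A)) :
    ∀ A, MeasurableSet A → 0 < P A →
      ∃ B ⊆ A, MeasurableSet B ∧ 0 < P B ∧ InMeasureImpliesL1 P K S (P.restrict B) := by
  intro A hA hApos
  obtain ⟨A', hA', hA'_large, hA'_good⟩ := h _ (ENNReal.toReal_pos hApos.ne' (measure_ne_top P A))
  refine ⟨A ∩ A', inter_subset_left, hA.inter hA', ?_,
    hA'_good.mono (Measure.restrict_mono inter_subset_right le_rfl)⟩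
  have hsum := measureReal_union_add_inter (μ := P) (s := A) hA'
  have hunion : P.real (A ∪ A') ≤ 1 := measureReal_le_one
  simp only [measureReal_def] at hsum hunion
  exact (ENNReal.toReal_pos_iff.1 (by linarith)).1

theorem exists_equivProb_of_forall_exists_subset [IsProbabilityMeasure P] (hK : BddL1 P K)
    (h : ∀ A, MeasurableSet A → 0 < P A →
      ∃ B ⊆ A, MeasurableSet B ∧ 0 < P B ∧ InMeasureImpliesL1 P K S (P.restrict B)) :
    ∃ Q, EquivProb P Q ∧ InMeasureImpliesL1 P K S Q := by
  obtain ⟨B, hB, hnull⟩ := exists_seq_measure_compl_iUnion_eq_zero (μ := P)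
    (p := fun B => MeasurableSet B ∧ InMeasureImpliesL1 P K S (P.restrict B))
    ⟨.empty, by simpa using InMeasureImpliesL1.zero⟩
    (fun s t hs ht => ⟨hs.1.union ht.1, (hs.2.add ht.2).mono (Measure.restrict_union_le s t)⟩)
    (fun s hs => hs.1)
    (fun A hA hApos => by
      obtain ⟨B, hBA, hBm, hBpos, hB⟩ := h A hA hApos
      exact ⟨B, hBA, ⟨hBm, hB⟩, hBpos⟩)
  set ν := Measure.sum fun k => (2⁻¹ : ℝ≥0∞) ^ k • P.restrict (B k)
  have hw : ∑' k : ℕ, (2⁻¹ : ℝ≥0∞) ^ k ≠ ∞ := by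
    rw [ENNReal.tsum_geometric, ENNReal.one_sub_inv_two, inv_inv]
    exact ENNReal.ofNat_ne_top
  have hνP : ν ≪ P := Measure.absolutelyContinuous_sum_left fun k =>
    Measure.smul_absolutelyContinuous.trans
      (Measure.absolutelyContinuous_of_le Measure.restrict_le_self)
  have hPν : P ≪ ν := absolutelyContinuous_sum_smul_restrict hnull fun k => by simp
  have : IsFiniteMeasure ν := ⟨by
    rw [Measure.sum_apply _ .univ]
    refine (ENNReal.tsum_le_tsum fun k => ?_).trans_lt hw.lt_top
    simpa using mul_le_of_le_one_right' prob_le_one⟩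
  have : NeZero ν := ⟨fun h0 => IsProbabilityMeasure.ne_zero P
    (Measure.absolutelyContinuous_zero_iff.1 (h0 ▸ hPν))⟩
  exact ⟨_, equivProb_inv_measure_univ_smul hνP hPν,
    (InMeasureImpliesL1.sum_smul hK (fun _ => Measure.restrict_le_self) (fun k => (hB k).2) hw).smul
      (ENNReal.inv_ne_top.2 (NeZero.ne _))⟩

end

theorem statement0_general (P : Measure Ω) [IsProbabilityMeasure P]
    (K S : Set (Ω → ℝ)) (hKbdd : BddL1 P K) :
    List.TFAE
      [(∃ Q : Measure Ω, EquivProb P Q ∧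
          ∀ (Xs : ℕ → Ω → ℝ) (X : Ω → ℝ), (∀ n, Xs n ∈ K) → X ∈ S →
            TendstoInMeasure P Xs atTop X →
            Tendsto (fun n => ∫⁻ ω, ENNReal.ofReal |Xs n ω - X ω| ∂Q) atTop (nhds 0)),
       (∀ ε : ℝ, 0 < ε → ∃ A : Set Ω, MeasurableSet A ∧ 1 - ε < (P A).toReal ∧
          ∀ (Xs : ℕ → Ω → ℝ) (X : Ω → ℝ), (∀ n, Xs n ∈ K) → X ∈ S →
            TendstoInMeasure P Xs atTop X →
            Tendsto (fun n => ∫⁻ ω in A, ENNReal.ofReal |Xs n ω - X ω| ∂P) atTop (nhds 0)),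
       (∀ A : Set Ω, MeasurableSet A → 0 < P A →
          ∃ B ⊆ A, MeasurableSet B ∧ 0 < P B ∧
          ∀ (Xs : ℕ → Ω → ℝ) (X : Ω → ℝ), (∀ n, Xs n ∈ K) → X ∈ S →
            TendstoInMeasure P Xs atTop X →
            Tendsto (fun n => ∫⁻ ω in B, ENNReal.ofReal |Xs n ω - X ω| ∂P) atTop (nhds 0))] := by
  tfae_have 1 → 2 := forall_exists_restrict_of_exists_equivProb
  tfae_have 2 → 3 := forall_exists_subset_of_forall_exists_restrict
  tfae_have 3 → 1 := exists_equivProb_of_forall_exists_subset hKbdd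
  tfae_finish

/-- Proposition 2.1: "de-switching" the equivalent probability measure. -/
theorem statement0 (P : Measure Ω) [IsProbabilityMeasure P]
    (K S : Set (Ω → ℝ)) (hKconv : Convex ℝ K) (hKbdd : BddL1 P K)
    (hS : S.Nonempty) (hSmeas : ∀ X ∈ S, AEStronglyMeasurable X P) :
    List.TFAE
      [(∃ Q : Measure Ω, EquivProb P Q ∧
          ∀ (Xs : ℕ → Ω → ℝ) (X : Ω → ℝ), (∀ n, Xs n ∈ K) → X ∈ S →
            TendstoInMeasure P Xs atTop X →
            Tendsto (fun n => ∫⁻ ω, ENNReal.ofReal |Xs n ω - X ω| ∂Q) atTop (nhds 0)),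
       (∀ ε : ℝ, 0 < ε → ∃ A : Set Ω, MeasurableSet A ∧ 1 - ε < (P A).toReal ∧
          ∀ (Xs : ℕ → Ω → ℝ) (X : Ω → ℝ), (∀ n, Xs n ∈ K) → X ∈ S →
            TendstoInMeasure P Xs atTop X →
            Tendsto (fun n => ∫⁻ ω in A, ENNReal.ofReal |Xs n ω - X ω| ∂P) atTop (nhds 0)),
       (∀ A : Set Ω, MeasurableSet A → 0 < P A →
          ∃ B ⊆ A, MeasurableSet B ∧ 0 < P B ∧
          ∀ (Xs : ℕ → Ω → ℝ) (X : Ω → ℝ), (∀ n, Xs n ∈ K) → X ∈ S →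
            TendstoInMeasure P Xs atTop X →
            Tendsto (fun n => ∫⁻ ω in B, ENNReal.ofReal |Xs n ω - X ω| ∂P) atTop (nhds 0))] :=
  statement0_general P K S hKbdd

end Paper
end
end

section
/- Let (Ω,Σ,P) be a probability space, let K be a convex set of P-integrable random variables, and let S be a nonempty subset of K. Suppose the relative L^0(P)-topology on K is uniformly locally convex-solid on S. Then for every measurable set A with P(A) > 0 there exists a bounded nonnegative random variable Y, not P-a.s. zero, with Y = 0 a.s. on the complement of A, such that E_P[|X_n − X|·Y] → 0 for every sequence (X_n) in K that converges in P-probability to some X ∈ S. -/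
/-!
Pick convex solid sets `W j` of `L⁰`-size `d(·, 0) < P(A) 4⁻ʲ / 8`, as uniform local
convex-solidity allows, and let `U` be the union of the dyadic sums
`W 0 + 2 W 1 + ⋯ + 2ⁿ⁻¹ W (n-1)`. Subadditivity of `d(·, 0)` keeps `U` inside the `d`-ball of
radius `P(A)/4`, so `1_A` has `L¹`-distance, hence `L²`-distance, at least `3 P(A)/4` from `U`.
Hahn–Banach and Riesz give `ψ ∈ L²` and `c` with `E[ψ G] < c < E[ψ 1_A]` for `G ∈ U`; in
particular `c > 0`. For `Z ∈ W j`, solidity allows replacing `Z` by its truncations carrying the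
sign of `ψ`, whence `E[|Z| (|ψ| ∧ 1)] ≤ c 2⁻ʲ`. Thus `Y = 1_A (|ψ| ∧ 1)` works: `X_n - X`
eventually lies in each `W j`, and `Y` is not a.s. zero because `E[ψ 1_A] > 0`.
-/

open MeasureTheory Filter Set ProbabilityTheory

noncomputable section

namespace Paper

variable {Ω : Type*} [MeasurableSpace Ω]

lemma min_abs_add_le (a b : ℝ) : min |a + b| 1 ≤ min |a| 1 + min |b| 1 := by
  rcases le_total |a| 1 with ha | ha <;> rcases le_total |b| 1 with hb | hb <;>
    simp only [min_eq_left, min_eq_right, ha, hb] <;>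
    linarith [abs_add_le a b, min_le_left |a + b| 1, min_le_right |a + b| 1, abs_nonneg a,
      abs_nonneg b]

lemma min_abs_mul_le {c : ℝ} (hc : 1 ≤ c) (a : ℝ) : min |c * a| 1 ≤ c * min |a| 1 := by
  rw [abs_mul, abs_of_nonneg (zero_le_one.trans hc)]
  rcases le_total |a| 1 with ha | ha
  · rw [min_eq_left ha]
    exact min_le_left _ _
  · rw [min_eq_right ha, mul_one]
    exact (min_le_right _ _).trans hc

lemma le_abs_sub_add_min_abs_one {a : ℝ} (ha : a ≤ 1) (g : ℝ) : a ≤ |a - g| + min |g| 1 := by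
  rcases le_total |g| 1 with hg | hg
  · rw [min_eq_left hg]
    linarith [abs_sub_abs_le_abs_sub a g, le_abs_self a]
  · rw [min_eq_right hg]
    linarith [abs_nonneg (a - g)]

section probDist

variable {P : Measure Ω}

lemma integrable_min_abs_one [IsFiniteMeasure P] {Z : Ω → ℝ} (hZ : AEStronglyMeasurable Z P) :
    Integrable (fun ω => min |Z ω| 1) P := by
  refine (integrable_const (1 : ℝ)).mono' (by fun_prop) (.of_forall fun ω => ?_)
  rw [Real.norm_eq_abs, abs_of_nonneg (le_min (abs_nonneg _) zero_le_one)]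
  exact min_le_right _ _

lemma probDist_zero (Z : Ω → ℝ) : probDist P Z 0 = ∫ ω, min |Z ω| 1 ∂P := by
  simp [probDist]

lemma probDist_nonneg (X Y : Ω → ℝ) : 0 ≤ probDist P X Y :=
  integral_nonneg fun _ => le_min (abs_nonneg _) zero_le_one

lemma probDist_self (X : Ω → ℝ) : probDist P X X = 0 := by
  simp [probDist]

lemma probDist_add_le [IsFiniteMeasure P] {X Y : Ω → ℝ} (hX : AEStronglyMeasurable X P)
    (hY : AEStronglyMeasurable Y P) : probDist P (X + Y) 0 ≤ probDist P X 0 + probDist P Y 0 := by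
  simp only [probDist_zero, ← integral_add (integrable_min_abs_one hX) (integrable_min_abs_one hY)]
  exact integral_mono (integrable_min_abs_one (hX.add hY))
    ((integrable_min_abs_one hX).add (integrable_min_abs_one hY)) fun ω => min_abs_add_le _ _

lemma probDist_smul_le [IsFiniteMeasure P] {c : ℝ} (hc : 1 ≤ c) {X : Ω → ℝ}
    (hX : AEStronglyMeasurable X P) : probDist P (c • X) 0 ≤ c * probDist P X 0 := by
  simp only [probDist_zero, ← integral_const_mul]
  exact integral_mono (integrable_min_abs_one (hX.const_smul c))
    ((integrable_min_abs_one hX).const_mul c) fun ω => min_abs_mul_le hc _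

lemma probDist_le_add_measureReal [IsProbabilityMeasure P] {X Y : Ω → ℝ}
    (hX : AEStronglyMeasurable X P) (hY : AEStronglyMeasurable Y P) {ε : ℝ} (hε : 0 ≤ ε) :
    probDist P X Y ≤ ε + P.real {ω | ε ≤ dist (X ω) (Y ω)} := by
  have hB : NullMeasurableSet {ω | ε ≤ dist (X ω) (Y ω)} P :=
    nullMeasurableSet_le aemeasurable_const (hX.aemeasurable.dist hY.aemeasurable)
  calc probDist P X Y
      ≤ ∫ ω, (ε + {ω | ε ≤ dist (X ω) (Y ω)}.indicator (fun _ => 1) ω) ∂P := by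
        refine integral_mono (integrable_min_abs_one (hX.sub hY))
          ((integrable_const ε).add ((integrable_const 1).indicator₀ hB)) fun ω => ?_
        by_cases h : ε ≤ dist (X ω) (Y ω)
        · rw [Set.indicator_of_mem (show ω ∈ {ω | ε ≤ dist (X ω) (Y ω)} from h)]
          linarith [min_le_right |X ω - Y ω| 1]
        · rw [Set.indicator_of_notMem (show ω ∉ {ω | ε ≤ dist (X ω) (Y ω)} from h), add_zero]
          rw [Real.dist_eq, not_le] at h
          exact (min_le_left _ _).trans h.le
    _ = ε + P.real {ω | ε ≤ dist (X ω) (Y ω)} := by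
        rw [integral_add (integrable_const ε) ((integrable_const 1).indicator₀ hB),
          integral_indicator₀ hB]
        simp

lemma tendsto_probDist_of_tendstoInMeasure [IsProbabilityMeasure P] {Xs : ℕ → Ω → ℝ}
    {X : Ω → ℝ} (hXs : ∀ n, AEStronglyMeasurable (Xs n) P) (hX : AEStronglyMeasurable X P)
    (h : TendstoInMeasure P Xs atTop X) :
    Tendsto (fun n => probDist P (Xs n) X) atTop (nhds 0) := by
  refine tendsto_order.2 ⟨fun a ha => .of_forall fun n => ha.trans_le (probDist_nonneg _ _),
    fun a ha => ?_⟩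
  have hsmall := (tendstoInMeasure_iff_measureReal_dist.1 h (a / 2) (half_pos ha)).eventually
    (gt_mem_nhds (half_pos ha))
  filter_upwards [hsmall] with n hn
  linarith [probDist_le_add_measureReal (hXs n) hX (half_pos ha).le]

end probDist

open scoped Pointwise

def dyadicSums {E : Type*} [AddCommGroup E] [Module ℝ E] (W : ℕ → Set E) : ℕ → Set E
  | 0 => {0}
  | n + 1 => dyadicSums W n + (2 : ℝ) ^ n • W n

section dyadicSums

variable {E : Type*} [AddCommGroup E] [Module ℝ E] {W : ℕ → Set E}

lemma convex_dyadicSums (hW : ∀ j, Convex ℝ (W j)) (n : ℕ) : Convex ℝ (dyadicSums W n) := by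
  induction n with
  | zero => exact convex_singleton 0
  | succ n ih => exact ih.add ((hW n).smul _)

lemma monotone_dyadicSums (hW : ∀ j, 0 ∈ W j) : Monotone (dyadicSums W) :=
  monotone_nat_of_le_succ fun n => Set.subset_add_left _ (Set.zero_mem_smul_set (hW n))

lemma convex_iUnion_dyadicSums (hWc : ∀ j, Convex ℝ (W j)) (hW0 : ∀ j, 0 ∈ W j) :
    Convex ℝ (⋃ n, dyadicSums W n) :=
  (monotone_dyadicSums hW0).directed_le.convex_iUnion fun n => convex_dyadicSums hWc n

lemma smul_mem_dyadicSums (hW : ∀ j, 0 ∈ W j) {j : ℕ} {Z : E} (hZ : Z ∈ W j) :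
    (2 : ℝ) ^ j • Z ∈ dyadicSums W (j + 1) := by
  have h0 : (0 : E) ∈ dyadicSums W j := monotone_dyadicSums hW (Nat.zero_le j) rfl
  have h := Set.add_mem_add h0 (Set.smul_mem_smul_set (a := (2 : ℝ) ^ j) hZ)
  rwa [zero_add] at h

end dyadicSums

lemma probDist_le_of_mem_dyadicSums {W : ℕ → Set (Ω → ℝ)} {P : Measure Ω} [IsFiniteMeasure P]
    {ε : ℕ → ℝ}
    (hW : ∀ j, ∀ Z ∈ W j, AEStronglyMeasurable Z P ∧ probDist P Z 0 ≤ ε j) :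
    ∀ n, ∀ G ∈ dyadicSums W n,
      AEStronglyMeasurable G P ∧ probDist P G 0 ≤ ∑ j ∈ Finset.range n, 2 ^ j * ε j
  | 0, _, rfl => ⟨aestronglyMeasurable_const, by simp [probDist_self]⟩
  | n + 1, _, ⟨G, hG, _, ⟨Z, hZ, rfl⟩, rfl⟩ => by
    obtain ⟨hGm, hGd⟩ := probDist_le_of_mem_dyadicSums hW n G hG
    obtain ⟨hZm, hZd⟩ := hW n Z hZ
    refine ⟨hGm.add (hZm.const_smul _), ?_⟩
    rw [Finset.sum_range_succ]
    calc probDist P (G + (2 : ℝ) ^ n • Z) 0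
        ≤ probDist P G 0 + (2 : ℝ) ^ n * probDist P Z 0 :=
          (probDist_add_le hGm (hZm.const_smul _)).trans
            (add_le_add_right (probDist_smul_le (one_le_pow₀ one_le_two) hZm) _)
      _ ≤ _ := add_le_add hGd (mul_le_mul_of_nonneg_left hZd (by positivity))

lemma probDist_le_of_mem_iUnion_dyadicSums {W : ℕ → Set (Ω → ℝ)} {P : Measure Ω}
    [IsFiniteMeasure P] {a : ℝ} (ha : 0 ≤ a)
    (hW : ∀ j, ∀ Z ∈ W j, AEStronglyMeasurable Z P ∧ probDist P Z 0 ≤ a * (1 / 4) ^ j) :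
    ∀ G ∈ ⋃ n, dyadicSums W n, probDist P G 0 ≤ 2 * a := by
  simp only [Set.mem_iUnion]
  rintro G ⟨n, hG⟩
  refine (probDist_le_of_mem_dyadicSums hW n G hG).2.trans ?_
  calc ∑ j ∈ Finset.range n, 2 ^ j * (a * (1 / 4) ^ j)
      = a * ∑ j ∈ Finset.range n, (1 / 2 : ℝ) ^ j := by
        rw [Finset.mul_sum]
        refine Finset.sum_congr rfl fun j _ => ?_
        rw [mul_left_comm, ← mul_pow]
        norm_num
    _ ≤ a * 2 := by gcongr; exact sum_geometric_two_le n
    _ = 2 * a := mul_comm _ _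

lemma convex_setOf_ae_eq_mem {E : Type*} [NormedAddCommGroup E] [NormedSpace ℝ E]
    {p : ENNReal} [Fact (1 ≤ p)] {μ : Measure Ω} {s : Set (Ω → E)} (hs : Convex ℝ s) :
    Convex ℝ {u : Lp E p μ | ∃ g ∈ s, u =ᵐ[μ] g} := by
  rintro u ⟨f, hf, hu⟩ v ⟨g, hg, hv⟩ a b ha hb hab
  refine ⟨a • f + b • g, hs hf hg ha hb hab, ?_⟩
  filter_upwards [Lp.coeFn_add (a • u) (b • v), Lp.coeFn_smul a u, Lp.coeFn_smul b v, hu, hv]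
    with ω h1 h2 h3 h4 h5
  rw [h1, Pi.add_apply, h2, h3, Pi.smul_apply, Pi.smul_apply, h4, h5]
  rfl

lemma integral_abs_le_norm {P : Measure Ω} [IsProbabilityMeasure P] (u : Lp ℝ 2 P) :
    ∫ ω, |u ω| ∂P ≤ ‖u‖ := by
  have hu := Lp.aestronglyMeasurable u
  simp_rw [Lp.norm_def, ← Real.norm_eq_abs]
  rw [integral_norm_eq_lintegral_enorm hu, ← eLpNorm_one_eq_lintegral_enorm]
  exact ENNReal.toReal_mono (Lp.eLpNorm_ne_top u)
    (eLpNorm_le_eLpNorm_of_exponent_le one_le_two hu)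

lemma tendsto_zero_of_forall_eventually_le {ι : Type*} {l : Filter ι} {u : ι → ℝ}
    (hu : ∀ i, 0 ≤ u i) {e : ℕ → ℝ} (he : Tendsto e atTop (nhds 0))
    (h : ∀ j, ∀ᶠ i in l, u i ≤ e j) : Tendsto u l (nhds 0) := by
  refine tendsto_order.2 ⟨fun a ha => .of_forall fun i => ha.trans_le (hu i), fun a ha => ?_⟩
  obtain ⟨j, hj⟩ := (he.eventually (gt_mem_nhds ha)).exists
  exact (h j).mono fun i hi => hi.trans_lt hj

lemma measureReal_le_norm_sub_add_probDist {P : Measure Ω} [IsProbabilityMeasure P] {A : Set Ω}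
    (hA : MeasurableSet A) {u : Lp ℝ 2 P} {G : Ω → ℝ} (hu : u =ᵐ[P] G) :
    P.real A ≤ ‖indicatorConstLp 2 hA (measure_ne_top P A) 1 - u‖ + probDist P G 0 := by
  set x : Lp ℝ 2 P := indicatorConstLp 2 hA (measure_ne_top P A) 1
  have hxu : ⇑(x - u) =ᵐ[P] fun ω => A.indicator 1 ω - G ω := by
    filter_upwards [Lp.coeFn_sub x u, (indicatorConstLp_coeFn : ⇑x =ᵐ[P] _), hu]
      with ω h1 h2 h3
    rw [h1, Pi.sub_apply, h2, h3]
    rfl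
  have hGm : AEStronglyMeasurable G P := (Lp.aestronglyMeasurable u).congr hu
  have hxu_int : Integrable (fun ω => A.indicator 1 ω - G ω) P :=
    ((Lp.memLp (x - u)).integrable one_le_two).congr hxu
  calc P.real A ≤ ∫ ω, |A.indicator 1 ω - G ω| ∂P + probDist P G 0 := by
        rw [probDist_zero, ← integral_indicator_one hA,
          ← integral_add hxu_int.abs (integrable_min_abs_one hGm)]
        refine integral_mono ((integrable_const 1).indicator hA)
          (hxu_int.abs.add (integrable_min_abs_one hGm)) fun ω => ?_
        exact le_abs_sub_add_min_abs_one (by by_cases h : ω ∈ A <;> simp [h]) _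
    _ = ∫ ω, |(x - u) ω| ∂P + probDist P G 0 := by
        congr 1
        exact integral_congr_ae (hxu.mono fun ω h => by simp only [h])
    _ ≤ ‖x - u‖ + probDist P G 0 := add_le_add_left (integral_abs_le_norm _) _

lemma exists_stronglyMeasurable_integral_mul_eq {P : Measure Ω} (f : StrongDual ℝ (Lp ℝ 2 P)) :
    ∃ ψ : Ω → ℝ, StronglyMeasurable ψ ∧ MemLp ψ 2 P ∧
      ∀ (u : Lp ℝ 2 P) (g : Ω → ℝ), u =ᵐ[P] g → f u = ∫ ω, ψ ω * g ω ∂P := by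
  set ψ := (InnerProductSpace.toDual ℝ (Lp ℝ 2 P)).symm f
  have hψ := Lp.aestronglyMeasurable ψ
  refine ⟨hψ.mk ψ, hψ.stronglyMeasurable_mk, (Lp.memLp ψ).ae_eq hψ.ae_eq_mk,
    fun u g hug => ?_⟩
  rw [← InnerProductSpace.toDual_symm_apply, L2.inner_def]
  refine integral_congr_ae ?_
  filter_upwards [hψ.ae_eq_mk, hug] with ω h1 h2
  simp [ψ, h1, h2, mul_comm]

theorem exists_L2_separation_of_probDist_le {P : Measure Ω} [IsProbabilityMeasure P] {A : Set Ω}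
    (hA : MeasurableSet A) {U : Set (Ω → ℝ)} (hU : Convex ℝ U) {r : ℝ} (hr : r < P.real A)
    (hUr : ∀ G ∈ U, probDist P G 0 ≤ r) :
    ∃ ψ : Ω → ℝ, StronglyMeasurable ψ ∧ MemLp ψ 2 P ∧ ∃ c : ℝ,
      (∀ G ∈ U, MemLp G 2 P → ∫ ω, ψ ω * G ω ∂P < c) ∧ c < ∫ ω in A, ψ ω ∂P := by
  set V : Set (Lp ℝ 2 P) := {u | ∃ G ∈ U, u =ᵐ[P] G}
  set x : Lp ℝ 2 P := indicatorConstLp 2 hA (measure_ne_top P A) 1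
  have hx : x ∉ closure V := fun hx => by
    obtain ⟨u, ⟨G, hG, hu⟩, hxu⟩ := Metric.mem_closure_iff.1 hx _ (sub_pos.2 hr)
    linarith [measureReal_le_norm_sub_add_probDist hA hu, hUr G hG, dist_eq_norm x u]
  obtain ⟨f, c, hfV, hfx⟩ :=
    geometric_hahn_banach_closed_point (convex_setOf_ae_eq_mem hU).closure isClosed_closure hx
  obtain ⟨ψ, hψm, hψ2, hf⟩ := exists_stronglyMeasurable_integral_mul_eq f
  refine ⟨ψ, hψm, hψ2, c, fun G hG hG2 => ?_, ?_⟩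
  · rw [← hf _ _ hG2.coeFn_toLp]
    exact hfV _ (subset_closure ⟨G, hG, hG2.coeFn_toLp⟩)
  · rw [← integral_indicator hA]
    convert hfx using 1
    rw [hf x _ indicatorConstLp_coeFn]
    congr 1 with ω
    by_cases h : ω ∈ A <;> simp [h]

theorem integral_abs_mul_le_of_solidSet {P : Measure Ω} {W : Set (Ω → ℝ)} (hW : SolidSet P W)
    {ψ Y : Ω → ℝ} (hψ : Measurable ψ) (hψi : Integrable ψ P) (hY : Measurable Y)
    (hY0 : ∀ ω, 0 ≤ Y ω) (hY1 : ∀ ω, Y ω ≤ 1) (hYψ : ∀ ω, Y ω ≤ |ψ ω|) {b : ℝ}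
    (hb : ∀ Z ∈ W, AEStronglyMeasurable Z P → (∃ C, ∀ ω, |Z ω| ≤ C) →
      ∫ ω, ψ ω * Z ω ∂P ≤ b)
    {Z : Ω → ℝ} (hZ : Z ∈ W) (hZi : Integrable Z P) : ∫ ω, |Z ω| * Y ω ∂P ≤ b := by
  have hZm := hZi.aestronglyMeasurable
  set s : Ω → ℝ := fun ω => if 0 ≤ ψ ω then 1 else -1
  have hs : Measurable s := Measurable.ite (measurableSet_le measurable_const hψ)
    measurable_const measurable_const
  have hs_abs : ∀ ω, |s ω| = 1 := fun ω => by by_cases h : 0 ≤ ψ ω <;> simp [s, h]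
  have hsψ : ∀ ω, ψ ω * s ω = |ψ ω| := fun ω => by
    by_cases h : 0 ≤ ψ ω
    · simp [s, h, abs_of_nonneg h]
    · simp [s, h, abs_of_neg (not_le.1 h)]
  -- Truncate `|Z|` at level `m` and give it the sign of `ψ`: solidity keeps it in `W`.
  have htrunc : ∀ m : ℕ, ∫ ω, min |Z ω| m * Y ω ∂P ≤ b := by
    intro m
    have hmin0 : ∀ ω, 0 ≤ min |Z ω| (m : ℝ) := fun ω => le_min (abs_nonneg _) m.cast_nonneg
    have hmin : ∀ ω, |min |Z ω| m * s ω| = min |Z ω| m := fun ω => by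
      rw [abs_mul, hs_abs, mul_one, abs_of_nonneg (hmin0 ω)]
    have hZs : AEStronglyMeasurable (fun ω => min |Z ω| m * s ω) P := by fun_prop
    calc ∫ ω, min |Z ω| m * Y ω ∂P ≤ ∫ ω, ψ ω * (min |Z ω| m * s ω) ∂P := by
          refine integral_mono_of_nonneg (.of_forall fun ω => mul_nonneg (hmin0 ω) (hY0 ω))
            (hψi.mul_bdd hZs (c := m) (.of_forall fun ω => (hmin ω).trans_le (min_le_right _ _)))
            (.of_forall fun ω => ?_)
          dsimp only
          rw [mul_left_comm, hsψ]
          exact mul_le_mul_of_nonneg_left (hYψ ω) (hmin0 ω)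
      _ ≤ b := hb _ (hW Z hZ _ hZs (.of_forall fun ω => (hmin ω).trans_le (min_le_left _ _)))
          hZs ⟨m, fun ω => (hmin ω).trans_le (min_le_right _ _)⟩
  refine le_of_tendsto' (tendsto_integral_of_dominated_convergence (fun ω => |Z ω|)
    (fun m => by fun_prop) hZi.abs (fun m => .of_forall fun ω => ?_) (.of_forall fun ω => ?_))
    htrunc
  · rw [Real.norm_eq_abs, abs_of_nonneg (mul_nonneg (le_min (abs_nonneg _) m.cast_nonneg) (hY0 ω))]
    exact (mul_le_mul (min_le_left _ _) (hY1 ω) (hY0 ω) (abs_nonneg _)).trans_eq (mul_one _)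
  · refine tendsto_const_nhds.congr' ((eventually_ge_atTop ⌈|Z ω|⌉₊).mono fun m hm => ?_)
    dsimp only
    rw [min_eq_left ((Nat.le_ceil _).trans (Nat.cast_le.2 hm))]

theorem exists_weight_of_convex_solid {P : Measure Ω} [IsProbabilityMeasure P] {A : Set Ω}
    (hA : MeasurableSet A) (hPA : 0 < P.real A) {W : ℕ → Set (Ω → ℝ)}
    (hWconv : ∀ j, Convex ℝ (W j)) (hWsolid : ∀ j, SolidSet P (W j)) (hW0 : ∀ j, 0 ∈ W j)
    (hWsmall : ∀ j, ∀ Z ∈ W j, Integrable Z P ∧ probDist P Z 0 ≤ P.real A / 8 * (1 / 4) ^ j) :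
    ∃ Y : Ω → ℝ, Measurable Y ∧ (∀ ω, 0 ≤ Y ω ∧ Y ω ≤ 1) ∧ ¬ (Y =ᵐ[P] (fun _ => 0)) ∧
      (∀ ω, ω ∉ A → Y ω = 0) ∧ ∃ c : ℝ, ∀ j, ∀ Z ∈ W j, ∫ ω, |Z ω| * Y ω ∂P ≤ c / 2 ^ j := by
  obtain ⟨ψ, hψm, hψ2, c, hψU, hcA⟩ := exists_L2_separation_of_probDist_le hA
    (convex_iUnion_dyadicSums hWconv hW0) (by linarith : 2 * (P.real A / 8) < P.real A)
    (probDist_le_of_mem_iUnion_dyadicSums (by positivity) fun j Z hZ =>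
      ⟨(hWsmall j Z hZ).1.aestronglyMeasurable, (hWsmall j Z hZ).2⟩)
  have hc : 0 < c := by
    simpa using hψU 0 (Set.mem_iUnion.2 ⟨0, rfl⟩) MemLp.zero
  set Y : Ω → ℝ := A.indicator fun ω => min |ψ ω| 1
  have hY01 : ∀ ω, 0 ≤ Y ω ∧ Y ω ≤ 1 := fun ω => by
    by_cases h : ω ∈ A <;> simp [Y, h]
  refine ⟨Y, (hψm.measurable.abs.min measurable_const).indicator hA, hY01, fun hY0 => ?_,
    fun ω h => Set.indicator_of_notMem h _, c, fun j Z hZ => ?_⟩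
  · have : ∫ ω in A, ψ ω ∂P = 0 := by
      rw [← integral_indicator hA]
      refine integral_eq_zero_of_ae (hY0.mono fun ω h => ?_)
      by_cases hω : ω ∈ A <;> simp_all [Y, min_eq_iff]
    linarith
  refine integral_abs_mul_le_of_solidSet (hWsolid j) hψm.measurable (hψ2.integrable one_le_two)
    ((hψm.measurable.abs.min measurable_const).indicator hA) (fun ω => (hY01 ω).1)
    (fun ω => (hY01 ω).2) (fun ω => ?_) (fun Z' hZ' hZ'm ⟨C, hC⟩ => ?_) hZ (hWsmall j Z hZ).1
  · by_cases h : ω ∈ A <;> simp [h]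
  have h2j : MemLp ((2 : ℝ) ^ j • Z') 2 P :=
    MemLp.of_bound (hZ'm.const_smul _) (2 ^ j * C) (.of_forall fun ω => by simp [hC ω])
  have := hψU _ (Set.mem_iUnion.2 ⟨j + 1, smul_mem_dyadicSums hW0 hZ'⟩) h2j
  simp only [Pi.smul_apply, smul_eq_mul, mul_left_comm _ ((2 : ℝ) ^ j), integral_const_mul] at this
  rw [le_div_iff₀ (by positivity)]
  linarith

theorem statement4_general (P : Measure Ω) [IsProbabilityMeasure P]
    (K S : Set (Ω → ℝ)) (hKint : ∀ X ∈ K, Integrable X P)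
    (hS : S.Nonempty) (hSsub : S ⊆ K)
    (hulcs : UnifLCS P K S) :
    ∀ A : Set Ω, MeasurableSet A → 0 < P A →
      ∃ Y : Ω → ℝ, Measurable Y ∧ (∃ C : ℝ, ∀ ω, |Y ω| ≤ C) ∧ (∀ ω, 0 ≤ Y ω) ∧
        ¬ (Y =ᵐ[P] (fun _ => 0)) ∧ (∀ᵐ ω ∂P, ω ∉ A → Y ω = 0) ∧
        ∀ (Xs : ℕ → Ω → ℝ) (X : Ω → ℝ), (∀ n, Xs n ∈ K) → X ∈ S →
          TendstoInMeasure P Xs atTop X →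
          Tendsto (fun n => ∫ ω, |Xs n ω - X ω| * Y ω ∂P) atTop (nhds 0) := by
  intro A hA hPA
  have hpA : 0 < P.real A := ENNReal.toReal_pos hPA.ne' (measure_ne_top P A)
  choose W hWint hWconv hWsolid hWsmall hWball using
    fun j : ℕ => hulcs (P.real A / 8 * (1 / 4) ^ j) (by positivity)
  have hW0 : ∀ j, 0 ∈ W j := fun j => by
    obtain ⟨X₀, hX₀⟩ := hS
    obtain ⟨δ, hδ, hball⟩ := hWball j X₀ hX₀
    simpa using hball X₀ (hSsub hX₀) (by rwa [probDist_self])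
  obtain ⟨Y, hYm, hY01, hYne, hYA, c, hYW⟩ := exists_weight_of_convex_solid hA hpA hWconv hWsolid
    hW0 fun j Z hZ => ⟨hWint j Z hZ, (hWsmall j Z hZ).le⟩
  refine ⟨Y, hYm, ⟨1, fun ω => by rw [abs_of_nonneg (hY01 ω).1]; exact (hY01 ω).2⟩,
    fun ω => (hY01 ω).1, hYne, .of_forall hYA, fun Xs X hXs hX hXsX => ?_⟩
  have hdist := tendsto_probDist_of_tendstoInMeasure (fun n => (hKint _ (hXs n)).1)
    (hKint X (hSsub hX)).1 hXsX
  refine tendsto_zero_of_forall_eventually_le (e := fun j => c / 2 ^ j)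
    (fun n => integral_nonneg fun ω => mul_nonneg (abs_nonneg _) (hY01 ω).1)
    (tendsto_const_nhds.div_atTop (tendsto_pow_atTop_atTop_of_one_lt one_lt_two)) fun j => ?_
  obtain ⟨δ, hδ, hball⟩ := hWball j X hX
  filter_upwards [hdist.eventually_lt_const hδ] with n hn
  exact hYW j _ (hball _ (hXs n) hn)

/-- Proposition 3.1 (Hahn–Banach type separation): under uniform local convex-solidity on `S`,
every set of positive measure supports a bounded nonnegative nonzero random variable `Y`
against which `|X_n - X|` integrates to zero along sequences converging in probability. -/
theorem statement4 (P : Measure Ω) [IsProbabilityMeasure P]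
    (K S : Set (Ω → ℝ)) (hKconv : Convex ℝ K) (hKint : ∀ X ∈ K, Integrable X P)
    (hS : S.Nonempty) (hSsub : S ⊆ K)
    (hulcs : UnifLCS P K S) :
    ∀ A : Set Ω, MeasurableSet A → 0 < P A →
      ∃ Y : Ω → ℝ, Measurable Y ∧ (∃ C : ℝ, ∀ ω, |Y ω| ≤ C) ∧ (∀ ω, 0 ≤ Y ω) ∧
        ¬ (Y =ᵐ[P] (fun _ => 0)) ∧ (∀ᵐ ω ∂P, ω ∉ A → Y ω = 0) ∧
        ∀ (Xs : ℕ → Ω → ℝ) (X : Ω → ℝ), (∀ n, Xs n ∈ K) → X ∈ S →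
          TendstoInMeasure P Xs atTop X →
          Tendsto (fun n => ∫ ω, |Xs n ω - X ω| * Y ω ∂P) atTop (nhds 0) :=
  statement4_general P K S hKint hS hSsub hulcs

end Paper
end
end

section
/- Let X be a topological vector space over ℝ and let A ⊆ X be a convex set with A = −A. Then the relative topology on A is locally convex at every point of A if and only if it is locally convex at 0. Here the relative topology on A is said to be locally convex at a point x ∈ A if for every neighborhood V of 0 in X there exist a neighborhood U of 0 in X and a convex set C ⊆ X such that (x + U) ∩ A ⊆ C ⊆ (x + V) ∩ A. -/
open MeasureTheory Filter Set ProbabilityTheory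

noncomputable section

namespace Paper

variable {Ω : Type*} [MeasurableSpace Ω]

lemma _root_.Convex.inv_two_smul_sub_mem {E : Type*} [AddCommGroup E] [Module ℝ E] {A : Set E}
    (hA : Convex ℝ A) {x y : E} (hy : y ∈ A) (hx : -x ∈ A) : (2 : ℝ)⁻¹ • (y - x) ∈ A := by
  convert hA hy hx (by norm_num : (0 : ℝ) ≤ 2⁻¹) (by norm_num : (0 : ℝ) ≤ 2⁻¹) (by norm_num)
    using 1
  module

lemma locConvexAtTVS_empty {E : Type*} [AddCommGroup E] [Module ℝ E] [TopologicalSpace E]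
    (x : E) : LocConvexAtTVS (∅ : Set E) x :=
  fun V hV => ⟨V, hV, ∅, convex_empty, by simp, by simp⟩

open scoped Pointwise in
/-- The map `y ↦ (y - x) / 2` sends `(x + 2U) ∩ A` into `U ∩ A` because `-x ∈ A`, so a convex
set sandwiched at `0` is transported to one sandwiched at `x` by `c ↦ x + 2c`. -/
theorem LocConvexAtTVS.of_zero {E : Type*} [AddCommGroup E] [Module ℝ E] [TopologicalSpace E]
    [ContinuousConstSMul ℝ E] {A : Set E} {x : E} (hA : Convex ℝ A) (hx : -x ∈ A)
    (h0 : LocConvexAtTVS A 0) : LocConvexAtTVS A x := by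
  have two_ne : (2 : ℝ) ≠ 0 := two_ne_zero
  intro V hV
  obtain ⟨U₀, hU₀, C₀, hC₀, hU₀C₀, hC₀V⟩ :=
    h0 ((2 : ℝ)⁻¹ • V) ((set_smul_mem_nhds_zero_iff (inv_ne_zero two_ne)).2 hV)
  refine ⟨(2 : ℝ) • U₀, (set_smul_mem_nhds_zero_iff two_ne).2 hU₀,
    ((fun c => x + c) '' ((2 : ℝ) • C₀)) ∩ A, (hC₀.smul 2).translate x |>.inter hA, ?_, ?_⟩
  · rintro _ ⟨⟨u, hu, rfl⟩, hyA⟩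
    have hz : (2 : ℝ)⁻¹ • u ∈ C₀ := by
      refine hU₀C₀ ⟨⟨_, (mem_smul_set_iff_inv_smul_mem₀ two_ne _ _).1 hu, zero_add _⟩, ?_⟩
      simpa using hA.inv_two_smul_sub_mem hyA hx
    exact ⟨⟨u, (mem_smul_set_iff_inv_smul_mem₀ two_ne _ _).2 hz, rfl⟩, hyA⟩
  · rintro _ ⟨⟨u, hu, rfl⟩, hyA⟩
    obtain ⟨⟨v, hv, hvu⟩, -⟩ := hC₀V ((mem_smul_set_iff_inv_smul_mem₀ two_ne _ _).1 hu)
    simp only [zero_add] at hvu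
    subst hvu
    exact ⟨⟨u, (smul_mem_smul_set_iff₀ (inv_ne_zero two_ne) _ _).1 hv, rfl⟩, hyA⟩

theorem statement15_general {E : Type*} [AddCommGroup E] [Module ℝ E] [TopologicalSpace E]
    [ContinuousSMul ℝ E]
    (A : Set E) (hA : Convex ℝ A) (hsymm : A = -A) :
    (∀ x ∈ A, LocConvexAtTVS A x) ↔ LocConvexAtTVS A 0 := by
  have neg_mem : ∀ x ∈ A, -x ∈ A := fun x hx => by rw [hsymm] at hx; simpa using hx
  refine ⟨fun h => ?_, fun h0 x hx => h0.of_zero hA (neg_mem x hx)⟩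
  rcases A.eq_empty_or_nonempty with rfl | ⟨a, ha⟩
  · exact locConvexAtTVS_empty 0
  · exact h 0 (by simpa using hA.inv_two_smul_sub_mem ha (neg_mem a ha))

/-- Lemma 4.8: for a convex symmetric subset `A` of a topological vector space, the relative
topology on `A` is locally convex everywhere iff it is locally convex at `0`. -/
theorem statement15 {E : Type*} [AddCommGroup E] [Module ℝ E] [TopologicalSpace E]
    [IsTopologicalAddGroup E] [ContinuousSMul ℝ E]
    (A : Set E) (hA : Convex ℝ A) (hsymm : A = -A) :
    (∀ x ∈ A, LocConvexAtTVS A x) ↔ LocConvexAtTVS A 0 :=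
  statement15_general A hA hsymm

end Paper
end
end

section
/- Let (Ω,Σ,P) be a probability space, let X and Y be random variables, and let ε > 0 satisfy P(|X + Y| > ε) < ε. Assume there exist a measurable set A with P(A) = 1/2 and a real number c such that X ≤ c a.s. on A and X ≥ c a.s. on the complement of A, and assume that the indicator 1_A and Y are independent. Then P(|Y + c| > ε) < 4ε. -/
/-!
On `A` we have `X ≤ c`, so a.s. `A ∩ {Y + c < -ε} ⊆ {|X + Y| > ε}`; by independence the left side
has probability `P(Y + c < -ε) / 2`, whence `P(Y + c < -ε) < 2ε`. Symmetrically, off `A` we get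
`P(Y + c > ε) < 2ε`, and the two bounds add up.
-/

open MeasureTheory Filter Set ProbabilityTheory

noncomputable section

namespace Paper

variable {Ω : Type*} [MeasurableSpace Ω]

section IndicatorIndependence

variable {β M : Type*} [MeasurableSpace β] [Zero M] [One M] [NeZero (1 : M)] [MeasurableSpace M]
  [MeasurableSingletonClass M] {P : Measure Ω} {A : Set Ω} {Y : Ω → β} {t : Set β}

lemma _root_.ProbabilityTheory.IndepFun.measure_inter_preimage_eq_mul_of_indicator
    (h : IndepFun (A.indicator fun _ => (1 : M)) Y P) (ht : MeasurableSet t) :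
    P (A ∩ Y ⁻¹' t) = P A * P (Y ⁻¹' t) := by
  classical
  simpa [Set.indicator_const_preimage_eq_union] using
    h.measure_inter_preimage_eq_mul {1} t (measurableSet_singleton _) ht

lemma _root_.ProbabilityTheory.IndepFun.measure_compl_inter_preimage_eq_mul_of_indicator
    (h : IndepFun (A.indicator fun _ => (1 : M)) Y P) (ht : MeasurableSet t) :
    P (Aᶜ ∩ Y ⁻¹' t) = P Aᶜ * P (Y ⁻¹' t) := by
  classical
  simpa [Set.indicator_const_preimage_eq_union] using
    h.measure_inter_preimage_eq_mul {0} t (measurableSet_singleton _) ht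

end IndicatorIndependence

lemma measure_le_two_mul_of_inter_eq_mul {P : Measure Ω} {E F S : Set Ω} (hE : 2⁻¹ ≤ P E)
    (hEF : P (E ∩ F) = P E * P F) (hS : (E ∩ F : Set Ω) ≤ᵐ[P] S) :
    P F ≤ 2 * P S :=
  calc P F = 2 * (2⁻¹ * P F) := by
        rw [← mul_assoc, ENNReal.mul_inv_cancel two_ne_zero ENNReal.ofNat_ne_top, one_mul]
    _ ≤ 2 * (P E * P F) := by gcongr
    _ = 2 * P (E ∩ F) := by rw [hEF]
    _ ≤ 2 * P S := by grw [measure_mono_ae hS]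

lemma inv_two_le_measure_compl {P : Measure Ω} [IsProbabilityMeasure P] {A : Set Ω}
    (hA : P A ≤ 2⁻¹) : 2⁻¹ ≤ P Aᶜ := by
  have h := measure_univ_le_add_compl (μ := P) A
  rw [measure_univ] at h
  rw [← ENNReal.one_sub_inv_two, tsub_le_iff_left]
  exact h.trans (by gcongr)

theorem statement18_general (P : Measure Ω) [IsProbabilityMeasure P]
    (X Y : Ω → ℝ)
    (ε c : ℝ)
    (h1 : P {ω | ε < |X ω + Y ω|} < ENNReal.ofReal ε)
    (A : Set Ω) (hPA : P A = 1 / 2)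
    (hXA : ∀ᵐ ω ∂P, ω ∈ A → X ω ≤ c)
    (hXAc : ∀ᵐ ω ∂P, ω ∉ A → c ≤ X ω)
    (hindep : IndepFun (A.indicator (fun _ => (1 : ℝ))) Y P) :
    P {ω | ε < |Y ω + c|} < ENNReal.ofReal (4 * ε) := by
  set S := {ω | ε < |X ω + Y ω|}
  rw [one_div] at hPA
  have hlow : P (Y ⁻¹' Iio (-ε - c)) ≤ 2 * P S := by
    refine measure_le_two_mul_of_inter_eq_mul hPA.ge
      (hindep.measure_inter_preimage_eq_mul_of_indicator measurableSet_Iio) ?_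
    filter_upwards [hXA] with ω hX ⟨hA, (hY : Y ω < -ε - c)⟩
    exact lt_abs.mpr (Or.inr (by linarith [hX hA]))
  have hhigh : P (Y ⁻¹' Ioi (ε - c)) ≤ 2 * P S := by
    refine measure_le_two_mul_of_inter_eq_mul (inv_two_le_measure_compl hPA.le)
      (hindep.measure_compl_inter_preimage_eq_mul_of_indicator measurableSet_Ioi) ?_
    filter_upwards [hXAc] with ω hX ⟨hA, (hY : ε - c < Y ω)⟩
    exact lt_abs.mpr (Or.inl (by linarith [hX hA]))
  have hsplit : {ω | ε < |Y ω + c|} ⊆ Y ⁻¹' Ioi (ε - c) ∪ Y ⁻¹' Iio (-ε - c) := by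
    intro ω (hω : ε < |Y ω + c|)
    rcases lt_abs.mp hω with h | h
    · exact Or.inl (show ε - c < Y ω by linarith)
    · exact Or.inr (show Y ω < -ε - c by linarith)
  calc P {ω | ε < |Y ω + c|}
      ≤ P (Y ⁻¹' Ioi (ε - c)) + P (Y ⁻¹' Iio (-ε - c)) :=
        (measure_mono hsplit).trans (measure_union_le _ _)
    _ ≤ 2 * P S + 2 * P S := add_le_add hhigh hlow
    _ = 4 * P S := by ring
    _ < 4 * ENNReal.ofReal ε := ENNReal.mul_lt_mul_right four_ne_zero ENNReal.ofNat_ne_top h1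
    _ = ENNReal.ofReal (4 * ε) := by rw [ENNReal.ofReal_mul zero_le_four, ENNReal.ofReal_ofNat]

/-- Lemma 5.2: if `P(|X + Y| > ε) < ε`, `X` is below `c` a.s. on a set `A` of measure `1/2` and
above `c` a.s. off `A`, and `1_A` is independent of `Y`, then `P(|Y + c| > ε) < 4ε`. -/
theorem statement18 (P : Measure Ω) [IsProbabilityMeasure P]
    (X Y : Ω → ℝ) (hX : Measurable X) (hY : Measurable Y)
    (ε c : ℝ) (hε : 0 < ε)
    (h1 : P {ω | ε < |X ω + Y ω|} < ENNReal.ofReal ε)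
    (A : Set Ω) (hA : MeasurableSet A) (hPA : P A = 1 / 2)
    (hXA : ∀ᵐ ω ∂P, ω ∈ A → X ω ≤ c)
    (hXAc : ∀ᵐ ω ∂P, ω ∉ A → c ≤ X ω)
    (hindep : IndepFun (A.indicator (fun _ => (1 : ℝ))) Y P) :
    P {ω | ε < |Y ω + c|} < ENNReal.ofReal (4 * ε) :=
  statement18_general P X Y ε c h1 A hPA hXA hXAc hindep

end Paper
end
end
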